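/- arXiv:1108.5629 — 3 statements merged into one kernel-verified Lean document; each statement's English description precedes it below -/
import Mathlib

section
/- If Φ = (φₙ) is a Bessel sequence for H that is norm-bounded below (infₙ ‖φₙ‖ > 0), then for scalars (cₙ), the series ∑ₙ cₙ φₙ converges unconditionally if and only if (cₙ) ∈ ℓ². -/
open scoped BigOperators ComplexConjugate
open Filter Finset

variable {H : Type*} [NormedAddCommGroup H] [InnerProductSpace ℂ H] [CompleteSpace H]

local notation "⟪" x ", " y "⟫" => @inner ℂ _ _ x y

/-- A series `∑ φ n` converges unconditionally if every rearrangement converges. -/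
def UncondConv {H : Type*} [NormedAddCommGroup H] (φ : ℕ → H) : Prop :=
  ∀ σ : Equiv.Perm ℕ, ∃ L : H,
    Tendsto (fun N => ∑ n ∈ Finset.range N, φ (σ n)) atTop (nhds L)

/-- `ξ` is a Bessel sequence: `∑ n, |⟪h, ξ n⟫|² ≤ B ‖h‖²` for all `h`. -/
def Bessel {H : Type*} [NormedAddCommGroup H] [InnerProductSpace ℂ H] (ξ : ℕ → H) : Prop :=
  ∃ B : ℝ, ∀ h : H, ∀ F : Finset ℕ, ∑ n ∈ F, ‖(inner ℂ h (ξ n) : ℂ)‖ ^ 2 ≤ B * ‖h‖ ^ 2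

/-- `φ` is a Riesz basis: complete, and `A ∑|cₙ|² ≤ ‖∑ cₙ φₙ‖² ≤ B ∑|cₙ|²` for `(cₙ) ∈ ℓ²`. -/
def RieszBasis {H : Type*} [NormedAddCommGroup H] [InnerProductSpace ℂ H] (φ : ℕ → H) : Prop :=
  (Submodule.span ℂ (Set.range φ)).topologicalClosure = ⊤ ∧
  ∃ A B : ℝ, 0 < A ∧ ∀ c : ℕ → ℂ, Summable (fun n => ‖c n‖ ^ 2) →
    ∃ s : H, HasSum (fun n => c n • φ n) s ∧
      A * ∑' n, ‖c n‖ ^ 2 ≤ ‖s‖ ^ 2 ∧ ‖s‖ ^ 2 ≤ B * ∑' n, ‖c n‖ ^ 2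
lemma bessel_sum_bound {φ : ℕ → H} {B : ℝ} (hB0 : 0 ≤ B)
    (hB : ∀ h : H, ∀ F : Finset ℕ, ∑ n ∈ F, ‖(inner ℂ h (φ n) : ℂ)‖ ^ 2 ≤ B * ‖h‖ ^ 2)
    (c : ℕ → ℂ) (F : Finset ℕ) :
    ‖∑ n ∈ F, c n • φ n‖ ^ 2 ≤ B * ∑ n ∈ F, ‖c n‖ ^ 2 := by
  set s := ∑ n ∈ F, c n • φ n with hs
  have hX0 : (0:ℝ) ≤ ∑ n ∈ F, ‖c n‖ ^ 2 := Finset.sum_nonneg fun n _ => sq_nonneg _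
  have h1 : (inner ℂ s s : ℂ) = ∑ n ∈ F, c n * inner ℂ s (φ n) := by
    rw [hs]
    conv_lhs => rw [inner_sum]
    exact Finset.sum_congr rfl fun n _ => inner_smul_right _ _ _
  have h2 : ‖s‖ ^ 2 = ‖(inner ℂ s s : ℂ)‖ := by
    rw [@inner_self_eq_norm_sq_to_K ℂ]
    push_cast
    simp
  have h3 : ‖s‖ ^ 2 ≤ ∑ n ∈ F, ‖c n‖ * ‖(inner ℂ s (φ n) : ℂ)‖ := by
    rw [h2, h1]
    refine (norm_sum_le _ _).trans ?_
    exact le_of_eq (Finset.sum_congr rfl fun n _ => norm_mul _ _)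
  have h4 : (∑ n ∈ F, ‖c n‖ * ‖(inner ℂ s (φ n) : ℂ)‖) ^ 2 ≤
      (∑ n ∈ F, ‖c n‖ ^ 2) * (∑ n ∈ F, ‖(inner ℂ s (φ n) : ℂ)‖ ^ 2) :=
    Finset.sum_mul_sq_le_sq_mul_sq F _ _
  have h5 : (∑ n ∈ F, ‖(inner ℂ s (φ n) : ℂ)‖ ^ 2) ≤ B * ‖s‖ ^ 2 := hB s F
  rcases eq_or_ne ‖s‖ 0 with h0 | h0
  · rw [h0]
    nlinarith [mul_nonneg hB0 hX0]
  · have hpos : 0 < ‖s‖ ^ 2 := by positivity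
    have key : (‖s‖ ^ 2) ^ 2 ≤ ((∑ n ∈ F, ‖c n‖ ^ 2) * B) * ‖s‖ ^ 2 := by
      calc (‖s‖ ^ 2) ^ 2 ≤ (∑ n ∈ F, ‖c n‖ * ‖(inner ℂ s (φ n) : ℂ)‖) ^ 2 := by
            apply pow_le_pow_left₀ (by positivity) h3
        _ ≤ (∑ n ∈ F, ‖c n‖ ^ 2) * (∑ n ∈ F, ‖(inner ℂ s (φ n) : ℂ)‖ ^ 2) := h4
        _ ≤ ((∑ n ∈ F, ‖c n‖ ^ 2) * B) * ‖s‖ ^ 2 := by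
            rw [mul_assoc]
            exact mul_le_mul_of_nonneg_left h5 hX0
    have key2 : ‖s‖ ^ 2 * ‖s‖ ^ 2 ≤ ((∑ n ∈ F, ‖c n‖ ^ 2) * B) * ‖s‖ ^ 2 := by nlinarith [key]
    have h6 : ‖s‖ ^ 2 ≤ (∑ n ∈ F, ‖c n‖ ^ 2) * B := le_of_mul_le_mul_right key2 hpos
    rw [mul_comm]
    exact h6
lemma uncond_of_summable {x : ℕ → H} (hx : Summable x) : UncondConv x := by
  intro σ
  obtain ⟨L, hL⟩ := hx
  exact ⟨L, ((Equiv.hasSum_iff σ).mpr hL).tendsto_sum_nat⟩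

lemma summable_of_l2 {φ : ℕ → H} {B : ℝ} (hB0 : 0 ≤ B)
    (hB : ∀ h : H, ∀ F : Finset ℕ, ∑ n ∈ F, ‖(inner ℂ h (φ n) : ℂ)‖ ^ 2 ≤ B * ‖h‖ ^ 2)
    {c : ℕ → ℂ} (hc : Summable fun n => ‖c n‖ ^ 2)
    (hbd : ∀ (c : ℕ → ℂ) (F : Finset ℕ),
      ‖∑ n ∈ F, c n • φ n‖ ^ 2 ≤ B * ∑ n ∈ F, ‖c n‖ ^ 2) :
    Summable fun n => c n • φ n := by
  rw [summable_iff_vanishing]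
  intro e he
  rcases Metric.mem_nhds_iff.mp he with ⟨ε, hε, hball⟩
  have hδ : (0:ℝ) < ε ^ 2 / (B + 1) := by positivity
  obtain ⟨F₀, hF₀⟩ := summable_iff_vanishing.mp hc (Metric.ball 0 (ε ^ 2 / (B + 1)))
    (Metric.ball_mem_nhds _ hδ)
  refine ⟨F₀, fun t ht => hball ?_⟩
  have h1 := hF₀ t ht
  rw [Metric.mem_ball, dist_zero_right, Real.norm_eq_abs] at h1
  have hsum0 : (0:ℝ) ≤ ∑ n ∈ t, ‖c n‖ ^ 2 := Finset.sum_nonneg fun n _ => sq_nonneg _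
  have h2 : ∑ n ∈ t, ‖c n‖ ^ 2 < ε ^ 2 / (B + 1) := by rwa [abs_of_nonneg hsum0] at h1
  have h3 : ‖∑ n ∈ t, c n • φ n‖ ^ 2 < ε ^ 2 := by
    have := hbd c t
    have h4 : B * ∑ n ∈ t, ‖c n‖ ^ 2 ≤ (B + 1) * ∑ n ∈ t, ‖c n‖ ^ 2 := by nlinarith
    have h5 : (B + 1) * ∑ n ∈ t, ‖c n‖ ^ 2 < ε ^ 2 := by
      have := (mul_lt_mul_iff_right₀ (by linarith : (0:ℝ) < B + 1)).mpr h2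
      rwa [mul_div_cancel₀ _ (by linarith : (B:ℝ) + 1 ≠ 0)] at this
    linarith
  rw [Metric.mem_ball, dist_zero_right]
  exact lt_of_pow_lt_pow_left₀ 2 hε.le h3
lemma exists_signs (x : ℕ → H) (F : Finset ℕ) :
    ∃ ε : ℕ → ℂ, (∀ n, ε n = 1 ∨ ε n = -1) ∧
      ∑ n ∈ F, ‖x n‖ ^ 2 ≤ ‖∑ n ∈ F, ε n • x n‖ ^ 2 := by
  induction F using Finset.induction_on with
  | empty => exact ⟨fun _ => 1, fun _ => Or.inl rfl, by simp⟩
  | @insert a F ha ih =>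
    obtain ⟨ε, hε1, hε2⟩ := ih
    set s := ∑ n ∈ F, ε n • x n with hsdef
    set e : ℂ := if 0 ≤ (inner ℂ (x a) s : ℂ).re then 1 else -1 with hedef
    refine ⟨Function.update ε a e, ?_, ?_⟩
    · intro n
      rcases eq_or_ne n a with h | h
      · rw [h, Function.update_self, hedef]
        split_ifs with h'
        · left; rfl
        · right; rfl
      · rw [Function.update_of_ne h]; exact hε1 n
    · have hFs : ∑ n ∈ F, Function.update ε a e n • x n = s := by
        rw [hsdef]
        exact Finset.sum_congr rfl fun n hn =>
          by rw [Function.update_of_ne (by rintro rfl; exact ha hn)]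
      rw [Finset.sum_insert ha, Finset.sum_insert ha, Function.update_self, hFs]
      have hcross : (0:ℝ) ≤ (inner ℂ (e • x a) s : ℂ).re := by
        rw [inner_smul_left]
        rcases le_or_gt 0 (inner ℂ (x a) s : ℂ).re with h' | h'
        · have : e = 1 := by simp [hedef, h']
          rw [this]; simpa using h'
        · have : e = -1 := by simp [hedef, not_le.mpr h']
          rw [this]; simp; linarith
      have hnorm : ‖e • x a‖ = ‖x a‖ := by
        rw [norm_smul]
        rcases le_or_gt 0 (inner ℂ (x a) s : ℂ).re with h' | h' <;>
          simp [hedef, h', not_le.mpr, le_of_lt]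
      have hexp : ‖e • x a + s‖ ^ 2
          = ‖e • x a‖ ^ 2 + 2 * (inner ℂ (e • x a) s : ℂ).re + ‖s‖ ^ 2 := by
        exact_mod_cast @norm_add_sq ℂ _ _ _ _ (e • x a) s
      rw [hexp, hnorm]
      linarith
lemma block_perm (a : ℕ → ℕ) (F : ℕ → Finset ℕ) (ha0 : a 0 = 0)
    (hmono : ∀ k, a k < a (k + 1))
    (hFsub : ∀ k, F k ⊆ Finset.Ico (a k) (a (k + 1))) :
    ∃ σ : Equiv.Perm ℕ, ∀ k : ℕ,
      (Finset.range (a k)).image σ = Finset.range (a k) ∧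
      (Finset.range (a k + (F k).card)).image σ = Finset.range (a k) ∪ F k := by
  classical
  have hak : ∀ k, k ≤ a k := by
    intro k; induction k with
    | zero => omega
    | succ k ih => have := hmono k; omega
  -- the per-block lists
  set L : ℕ → List ℕ := fun k =>
    (F k).sort (· ≤ ·) ++ ((Finset.Ico (a k) (a (k + 1))) \ F k).sort (· ≤ ·) with hL
  have hcardle : ∀ k, (F k).card ≤ a (k + 1) - a k := by
    intro k
    have := Finset.card_le_card (hFsub k)
    rwa [Nat.card_Ico] at this
  have hLlen : ∀ k, (L k).length = a (k + 1) - a k := by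
    intro k
    simp only [hL, List.length_append, Finset.length_sort]
    rw [Finset.card_sdiff_of_subset (hFsub k), Nat.card_Ico]
    have := hcardle k
    omega
  have hLnodup : ∀ k, (L k).Nodup := by
    intro k
    refine List.Nodup.append (Finset.sort_nodup _ _) (Finset.sort_nodup _ _) ?_
    intro n hn1 hn2
    rw [Finset.mem_sort] at hn1 hn2
    exact (Finset.mem_sdiff.mp hn2).2 hn1
  have hLmem : ∀ k n, n ∈ L k ↔ n ∈ Finset.Ico (a k) (a (k + 1)) := by
    intro k n
    simp only [hL, List.mem_append, Finset.mem_sort, Finset.mem_sdiff]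
    constructor
    · rintro (h | h)
      exacts [hFsub k h, h.1]
    · intro h
      by_cases hn : n ∈ F k
      exacts [Or.inl hn, Or.inr ⟨h, hn⟩]
  -- block index
  have hex : ∀ n : ℕ, ∃ k, n < a (k + 1) := fun n =>
    ⟨n, lt_of_lt_of_le (Nat.lt_succ_self n) (hak (n + 1))⟩
  set blk : ℕ → ℕ := fun n => Nat.find (hex n) with hblk
  have hblk1 : ∀ n, n < a (blk n + 1) := fun n => Nat.find_spec (hex n)
  have hblk2 : ∀ n, a (blk n) ≤ n := by
    intro n
    rcases Nat.eq_zero_or_pos (blk n) with h | h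
    · rw [h, ha0]; exact Nat.zero_le n
    · obtain ⟨j, hj⟩ : ∃ j, blk n = j + 1 := ⟨blk n - 1, by omega⟩
      have hmin : ¬ (n < a (j + 1)) := Nat.find_min (hex n) (show j < blk n by omega)
      rw [hj]
      omega
  have haMono : StrictMono a := strictMono_nat_of_lt_succ hmono
  have hblk_eq : ∀ k n, a k ≤ n → n < a (k + 1) → blk n = k := by
    intro k n h1 h2
    have hle : blk n ≤ k := Nat.find_min' (hex n) h2
    rcases eq_or_lt_of_le hle with h | h
    · exact h
    · exfalso
      have : a (blk n + 1) ≤ a k := haMono.monotone (by omega)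
      have := hblk1 n
      omega
  -- the map
  set g : ℕ → ℕ := fun n => (L (blk n)).getD (n - a (blk n)) 0 with hg
  have hidx : ∀ n, n - a (blk n) < (L (blk n)).length := by
    intro n
    rw [hLlen]
    have := hblk1 n
    have := hblk2 n
    omega
  have hg_elem : ∀ n, g n = (L (blk n))[n - a (blk n)]'(hidx n) := fun n =>
    List.getD_eq_getElem _ _ (hidx n)
  have hg_memIco : ∀ n, g n ∈ Finset.Ico (a (blk n)) (a (blk n + 1)) := by
    intro n
    rw [← hLmem, hg_elem]
    exact List.getElem_mem _
  have hg_blk : ∀ n, blk (g n) = blk n := by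
    intro n
    have := Finset.mem_Ico.mp (hg_memIco n)
    exact hblk_eq _ _ this.1 this.2
  have hg_inj : Function.Injective g := by
    intro m n hmn
    have hbmn : blk m = blk n := by
      rw [← hg_blk m, ← hg_blk n, hmn]
    have hidxm := hidx m
    rw [hbmn] at hidxm
    have hmn' : (L (blk m)).getD (m - a (blk m)) 0 = (L (blk n)).getD (n - a (blk n)) 0 := hmn
    rw [hbmn] at hmn'
    rw [List.getD_eq_getElem _ _ hidxm, List.getD_eq_getElem _ _ (hidx n)] at hmn'
    have heq := (List.Nodup.getElem_inj_iff (hLnodup (blk n))).mp hmn'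
    have h1 := hblk2 m
    have h2 := hblk2 n
    rw [hbmn] at h1
    omega
  have hg_surj : Function.Surjective g := by
    intro m
    set k := blk m with hk
    have hmmem : m ∈ L k := (hLmem k m).mpr (Finset.mem_Ico.mpr ⟨hblk2 m, hblk1 m⟩)
    obtain ⟨i, hi, him⟩ := List.getElem_of_mem hmmem
    refine ⟨a k + i, ?_⟩
    have hblkn : blk (a k + i) = k := by
      apply hblk_eq
      · omega
      · have : i < a (k + 1) - a k := by rw [← hLlen]; exact hi
        omega
    show (L (blk (a k + i))).getD (a k + i - a (blk (a k + i))) 0 = m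
    rw [hblkn]
    have h2 : a k + i - a k = i := by omega
    rw [h2, List.getD_eq_getElem _ _ hi, him]
  refine ⟨Equiv.ofBijective g ⟨hg_inj, hg_surj⟩, ?_⟩
  have himg_blk : ∀ k, (Finset.Ico (a k) (a (k + 1))).image g = Finset.Ico (a k) (a (k + 1)) := by
    intro k
    apply Finset.eq_of_subset_of_card_le
    · intro m hm
      obtain ⟨n, hn, rfl⟩ := Finset.mem_image.mp hm
      rw [Finset.mem_Ico] at hn
      have hb : blk n = k := hblk_eq k n hn.1 hn.2
      have := hg_memIco n
      rwa [hb] at this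
    · rw [Finset.card_image_of_injective _ hg_inj]
  have himg_range : ∀ k, (Finset.range (a k)).image g = Finset.range (a k) := by
    intro k
    induction k with
    | zero => rw [ha0]; simp
    | succ k ih =>
      have hsp : Finset.range (a (k + 1)) = Finset.range (a k) ∪ Finset.Ico (a k) (a (k + 1)) := by
        rw [Finset.range_eq_Ico, Finset.range_eq_Ico, Finset.Ico_union_Ico_eq_Ico (Nat.zero_le _) (le_of_lt (hmono k))]
      rw [hsp, Finset.image_union, ih, himg_blk]
  intro k
  refine ⟨himg_range k, ?_⟩
  have hsplit : Finset.range (a k + (F k).card) =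
      Finset.range (a k) ∪ Finset.Ico (a k) (a k + (F k).card) := by
    rw [Finset.range_eq_Ico, Finset.range_eq_Ico, Finset.Ico_union_Ico_eq_Ico (Nat.zero_le _) (Nat.le_add_right _ _)]
  have himgF : (Finset.Ico (a k) (a k + (F k).card)).image g = F k := by
    apply Finset.eq_of_subset_of_card_le
    · intro m hm
      obtain ⟨n, hn, rfl⟩ := Finset.mem_image.mp hm
      rw [Finset.mem_Ico] at hn
      have hcard := hcardle k
      have hlt : n < a (k + 1) := by omega
      have hb : blk n = k := hblk_eq k n hn.1 hlt
      have hidx2 : n - a k < ((F k).sort (· ≤ ·)).length := by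
        rw [Finset.length_sort]; omega
      have hgn : g n = ((F k).sort (· ≤ ·)).getD (n - a k) 0 := by
        show (L (blk n)).getD (n - a (blk n)) 0 = _
        rw [hb]
        show (((F k).sort (· ≤ ·)) ++ _).getD (n - a k) 0 = _
        exact List.getD_append _ _ _ _ hidx2
      rw [hgn, List.getD_eq_getElem _ _ hidx2]
      rw [← Finset.mem_sort (α := ℕ) (· ≤ ·)]
      exact List.getElem_mem _
    · rw [Finset.card_image_of_injective _ hg_inj, Nat.card_Ico]
      omega
  show (Finset.range (a k + (F k).card)).image g = _
  rw [hsplit, Finset.image_union, himg_range k, himgF]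

lemma uncond_vanishing {x : ℕ → H} (hu : UncondConv x) {ε : ℝ} (hε : 0 < ε) :
    ∃ N : ℕ, ∀ F : Finset ℕ, (∀ n ∈ F, N ≤ n) → ‖∑ n ∈ F, x n‖ ≤ ε := by
  by_contra hcon
  push_neg at hcon
  choose pick hpick1 hpick2 using hcon
  set a : ℕ → ℕ := fun k => Nat.rec 0 (fun _ ak => max (ak + 1) ((pick ak).sup id + 1)) k
    with ha
  have ha0 : a 0 = 0 := rfl
  have haS : ∀ k, a (k + 1) = max (a k + 1) ((pick (a k)).sup id + 1) := fun k => rfl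
  have hmono : ∀ k, a k < a (k + 1) := fun k => by rw [haS]; omega
  have hak : ∀ k, k ≤ a k := by
    intro k
    induction k with
    | zero => omega
    | succ k ih => have := hmono k; omega
  set F : ℕ → Finset ℕ := fun k => pick (a k) with hFdef
  have hFsub : ∀ k, F k ⊆ Finset.Ico (a k) (a (k + 1)) := by
    intro k n hn
    rw [Finset.mem_Ico]
    refine ⟨hpick1 _ n hn, ?_⟩
    have h1 : n ≤ (pick (a k)).sup id := Finset.le_sup (f := id) hn
    have h2 := haS k
    omega
  obtain ⟨σ, hσ⟩ := block_perm a F ha0 hmono hFsub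
  obtain ⟨Lim, hLim⟩ := hu σ
  set S : ℕ → H := fun N => ∑ n ∈ Finset.range N, x (σ n) with hS
  have key : ∀ k, S (a k + (F k).card) - S (a k) = ∑ n ∈ F k, x n := by
    intro k
    obtain ⟨h1, h2⟩ := hσ k
    have e1 : S (a k) = ∑ m ∈ (Finset.range (a k)).image σ, x m := by
      rw [hS]
      exact (Finset.sum_image (fun m _ n _ h => σ.injective h)).symm
    have e2 : S (a k + (F k).card) = ∑ m ∈ (Finset.range (a k + (F k).card)).image σ, x m := by
      rw [hS]
      exact (Finset.sum_image (fun m _ n _ h => σ.injective h)).symm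
    have hdisj : Disjoint (Finset.range (a k)) (F k) := by
      rw [Finset.disjoint_left]
      intro n hn hnF
      rw [Finset.mem_range] at hn
      exact absurd (hpick1 _ n hnF) (by omega)
    rw [e1, e2, h1, h2, Finset.sum_union hdisj]
    abel
  have hatop : Tendsto a atTop atTop := tendsto_atTop_mono hak tendsto_id
  have t1 : Tendsto (fun k => S (a k)) atTop (nhds Lim) := hLim.comp hatop
  have t2 : Tendsto (fun k => S (a k + (F k).card)) atTop (nhds Lim) :=
    hLim.comp (tendsto_atTop_mono (fun k => le_trans (hak k) (Nat.le_add_right _ _)) tendsto_id)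
  have t3 : Tendsto (fun k => S (a k + (F k).card) - S (a k)) atTop (nhds 0) := by
    simpa using t2.sub t1
  have t4 : Tendsto (fun k => ‖∑ n ∈ F k, x n‖) atTop (nhds 0) := by
    have := t3.norm
    simp only [key, norm_zero] at this
    exact this
  obtain ⟨k, hk⟩ := (t4.eventually_lt_const hε).exists
  exact absurd (hpick2 (a k)) (not_lt.mpr hk.le)

lemma signed_sum_split {H : Type*} [NormedAddCommGroup H] [Module ℂ H]
    (x : ℕ → H) (ε : ℕ → ℂ) (hε1 : ∀ n, ε n = 1 ∨ ε n = -1) (F : Finset ℕ) :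
    ∑ n ∈ F, ε n • x n =
      (∑ n ∈ F.filter (fun n => ε n = 1), x n) -
        (∑ n ∈ F.filter (fun n => ¬ ε n = 1), x n) := by
  rw [← Finset.sum_filter_add_sum_filter_not F (fun n => ε n = 1) (fun n => ε n • x n)]
  have hP : ∑ n ∈ F.filter (fun n => ε n = 1), ε n • x n
      = ∑ n ∈ F.filter (fun n => ε n = 1), x n :=
    Finset.sum_congr rfl fun n hn => by rw [(Finset.mem_filter.mp hn).2, one_smul]
  have hQ : ∑ n ∈ F.filter (fun n => ¬ ε n = 1), ε n • x n
      = -∑ n ∈ F.filter (fun n => ¬ ε n = 1), x n := by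
    rw [← Finset.sum_neg_distrib]
    exact Finset.sum_congr rfl fun n hn => by
      rw [(hε1 n).resolve_left (Finset.mem_filter.mp hn).2, neg_smul, one_smul]
  rw [hP, hQ]
  abel

theorem stmt2 (φ : ℕ → H) (hB : Bessel φ) (hnbb : ∃ a : ℝ, 0 < a ∧ ∀ n, a ≤ ‖φ n‖)
    (c : ℕ → ℂ) :
    UncondConv (fun n => c n • φ n) ↔ Summable (fun n => ‖c n‖ ^ 2) := by
  obtain ⟨a, ha, hnbb⟩ := hnbb
  obtain ⟨B, hB⟩ := hB
  have hB0 : 0 ≤ B := by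
    have h := hB (φ 0) {0}
    rw [Finset.sum_singleton] at h
    have h2 : ‖(inner ℂ (φ 0) (φ 0) : ℂ)‖ = ‖φ 0‖ ^ 2 := by
      rw [@inner_self_eq_norm_sq_to_K ℂ]
      simp
    rw [h2] at h
    have h3 := hnbb 0
    have h4 : 0 < ‖φ 0‖ := lt_of_lt_of_le ha h3
    nlinarith [mul_pos h4 h4]
  constructor
  · intro hu
    set x : ℕ → H := fun n => c n • φ n with hx
    obtain ⟨N, hN⟩ := uncond_vanishing hu one_pos
    set M : ℝ := (∑ n ∈ Finset.range N, ‖x n‖) + 1 with hM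
    have hMbound : ∀ F : Finset ℕ, ‖∑ n ∈ F, x n‖ ≤ M := by
      intro F
      rw [← Finset.filter_union_filter_not_eq (fun n => n < N) F,
        Finset.sum_union (Finset.disjoint_filter_filter_not F F _)]
      refine (norm_add_le _ _).trans ?_
      have b1 : ‖∑ n ∈ F.filter (fun n => n < N), x n‖ ≤ ∑ n ∈ Finset.range N, ‖x n‖ := by
        refine (norm_sum_le _ _).trans ?_
        refine Finset.sum_le_sum_of_subset_of_nonneg ?_ (fun n _ _ => norm_nonneg _)
        intro n hn
        rw [Finset.mem_range]
        exact (Finset.mem_filter.mp hn).2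
      have b2 : ‖∑ n ∈ F.filter (fun n => ¬ n < N), x n‖ ≤ 1 := by
        apply hN
        intro n hn
        exact not_lt.mp (Finset.mem_filter.mp hn).2
      rw [hM]
      linarith
    have hM0 : 0 ≤ M := by simpa using hMbound ∅
    have hsq : Summable (fun n => ‖x n‖ ^ 2) := by
      apply summable_of_sum_le (c := (2 * M) ^ 2) (fun n => sq_nonneg _)
      intro F
      obtain ⟨ε, hε1, hε2⟩ := exists_signs x F
      have hb2 : ‖∑ n ∈ F, ε n • x n‖ ≤ 2 * M := by
        rw [signed_sum_split x ε hε1 F]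
        refine (norm_sub_le _ _).trans ?_
        have := hMbound (F.filter (fun n => ε n = 1))
        have := hMbound (F.filter (fun n => ¬ ε n = 1))
        linarith
      refine hε2.trans ?_
      exact pow_le_pow_left₀ (norm_nonneg _) hb2 2
    apply Summable.of_nonneg_of_le (fun n => sq_nonneg _) (fun n => ?_) (hsq.mul_left (a⁻¹ ^ 2))
    have hxn : a ^ 2 * ‖c n‖ ^ 2 ≤ ‖x n‖ ^ 2 := by
      have h1 : ‖x n‖ = ‖c n‖ * ‖φ n‖ := norm_smul _ _
      have h2 := hnbb n
      have h3 : ‖x n‖ ^ 2 = ‖c n‖ ^ 2 * ‖φ n‖ ^ 2 := by rw [h1]; ring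
      have h4 : a ^ 2 ≤ ‖φ n‖ ^ 2 := by nlinarith [norm_nonneg (φ n)]
      have h5 := mul_le_mul_of_nonneg_left h4 (sq_nonneg (‖c n‖))
      nlinarith [h5]
    calc ‖c n‖ ^ 2 = a⁻¹ ^ 2 * (a ^ 2 * ‖c n‖ ^ 2) := by
          field_simp
      _ ≤ a⁻¹ ^ 2 * ‖x n‖ ^ 2 := by
          exact mul_le_mul_of_nonneg_left hxn (by positivity)
  · intro hc
    exact uncond_of_summable (summable_of_l2 hB0 hB hc (bessel_sum_bound hB0 hB))
end

section
/- If M_{m,Φ,Ψ} is unconditionally convergent on H and Φ is norm-bounded below, then (mₙ ψₙ) is a Bessel sequence for H. -/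
open scoped BigOperators ComplexConjugate
open Filter Finset

variable {H : Type*} [NormedAddCommGroup H] [InnerProductSpace ℂ H] [CompleteSpace H]

local notation "⟪" x ", " y "⟫" => @inner ℂ _ _ x y

/-- An unconditionally convergent series (in the sense of rearrangements) is summable. -/
lemma uncondConv_summable {E : Type*} [NormedAddCommGroup E] [CompleteSpace E]
    (x : ℕ → E) (hu : UncondConv x) : Summable x := by
  by_contra hs
  rw [summable_iff_vanishing_norm] at hs
  push_neg at hs
  obtain ⟨ε, hε, key⟩ := hs
  choose T hTd hTn using key
  set M : ℕ → ℕ := fun k => Nat.rec 0 (fun _ Mk => (T (Finset.range Mk)).sup id + 1) k with hMdef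
  have hM0 : M 0 = 0 := rfl
  set t : ℕ → Finset ℕ := fun k => T (Finset.range (M k)) with htdef
  have hMs : ∀ k, M (k + 1) = (t k).sup id + 1 := fun k => rfl
  have htn : ∀ k, ε ≤ ‖∑ i ∈ t k, x i‖ := fun k => hTn _
  have htub : ∀ k, ∀ n ∈ t k, n < M (k + 1) := by
    intro k n hn
    rw [hMs]
    exact Nat.lt_succ_of_le (Finset.le_sup (f := id) hn)
  have htlb : ∀ k, ∀ n ∈ t k, M k ≤ n := by
    intro k n hn
    by_contra hlt
    push_neg at hlt
    exact (Finset.disjoint_left.mp (hTd _) hn) (Finset.mem_range.mpr hlt)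
  have htne : ∀ k, (t k).Nonempty := by
    intro k
    rcases Finset.eq_empty_or_nonempty (t k) with he | hne
    · exfalso; have := htn k; rw [he] at this; simp at this; linarith
    · exact hne
  have hMlt : ∀ k, M k < M (k + 1) := by
    intro k
    obtain ⟨n, hn⟩ := htne k
    exact lt_of_le_of_lt (htlb k n hn) (htub k n hn)
  have hMmono : StrictMono M := strictMono_nat_of_lt_succ hMlt
  have hMle : ∀ k, k ≤ M k := fun k => hMmono.le_apply
  have htsub : ∀ k, t k ⊆ Finset.Ico (M k) (M (k + 1)) := fun k n hn =>
    Finset.mem_Ico.mpr ⟨htlb k n hn, htub k n hn⟩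
  -- block lists
  set L : ℕ → List ℕ := fun k =>
    ((Finset.Ico (M k) (M (k + 1)) \ t k).sort (· ≤ ·)) ++ ((t k).sort (· ≤ ·)) with hLdef
  have hcard : ∀ k, (Finset.Ico (M k) (M (k + 1)) \ t k).card
      = (M (k + 1) - M k) - (t k).card := by
    intro k
    rw [Finset.card_sdiff_of_subset (htsub k), Nat.card_Ico]
  have hcle : ∀ k, (t k).card ≤ M (k + 1) - M k := by
    intro k
    have := Finset.card_le_card (htsub k)
    rwa [Nat.card_Ico] at this
  have hLlen : ∀ k, (L k).length = M (k + 1) - M k := by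
    intro k
    rw [hLdef]
    simp only [List.length_append, Finset.length_sort]
    rw [hcard k]
    have := hcle k
    omega
  have hLnodup : ∀ k, (L k).Nodup := by
    intro k
    apply List.Nodup.append (Finset.sort_nodup _ _) (Finset.sort_nodup _ _)
    intro a ha hb
    rw [Finset.mem_sort] at ha hb
    exact (Finset.mem_sdiff.mp ha).2 hb
  have hLmem : ∀ k, ∀ y ∈ L k, y ∈ Finset.Ico (M k) (M (k + 1)) := by
    intro k y hy
    rw [hLdef, List.mem_append, Finset.mem_sort, Finset.mem_sort] at hy
    rcases hy with hy | hy
    · exact (Finset.mem_sdiff.mp hy).1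
    · exact htsub k hy
  -- index function
  have hex : ∀ n, ∃ k, n < M (k + 1) :=
    fun n => ⟨n, lt_of_lt_of_le (Nat.lt_succ_self n) (hMle (n + 1))⟩
  set K : ℕ → ℕ := fun n => Nat.find (hex n) with hKdef
  have hKlt : ∀ n, n < M (K n + 1) := fun n => Nat.find_spec (hex n)
  have hKge : ∀ n, M (K n) ≤ n := by
    intro n
    rcases Nat.eq_zero_or_pos (K n) with h0 | hpos
    · rw [h0, hM0]; exact Nat.zero_le n
    · have hmin := Nat.find_min (hex n) (Nat.sub_lt hpos one_pos)
      push_neg at hmin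
      have : K n - 1 + 1 = K n := Nat.succ_pred_eq_of_pos hpos
      rwa [this] at hmin
  have hKuniq : ∀ n k, M k ≤ n → n < M (k + 1) → K n = k := by
    intro n k h1 h2
    have hle : K n ≤ k := Nat.find_le h2
    rcases lt_or_eq_of_le hle with hlt | heq
    · exfalso
      have : M (K n + 1) ≤ M k := hMmono.monotone (Nat.succ_le_of_lt hlt)
      have := hKlt n
      omega
    · exact heq
  set σf : ℕ → ℕ := fun n => (L (K n)).getD (n - M (K n)) 0 with hσdef
  have hidx : ∀ n, n - M (K n) < (L (K n)).length := by
    intro n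
    rw [hLlen]
    have := hKlt n; have := hKge n
    omega
  have hσmem : ∀ n, σf n ∈ Finset.Ico (M (K n)) (M (K n + 1)) := by
    intro n
    apply hLmem
    rw [hσdef]
    simp only
    rw [List.getD_eq_getElem _ _ (hidx n)]
    exact List.getElem_mem _
  have hσblock : ∀ k n, M k ≤ n → n < M (k + 1) → σf n ∈ Finset.Ico (M k) (M (k + 1)) := by
    intro k n h1 h2
    have := hσmem n
    rwa [hKuniq n k h1 h2] at this
  have hinjblock : ∀ k n n', M k ≤ n → n < M (k + 1) → M k ≤ n' → n' < M (k + 1) →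
      σf n = σf n' → n = n' := by
    intro k n n' h1 h2 h1' h2' hEq
    rw [hσdef] at hEq
    simp only at hEq
    rw [hKuniq n k h1 h2, hKuniq n' k h1' h2'] at hEq
    have hi : n - M k < (L k).length := by rw [hLlen]; omega
    have hi' : n' - M k < (L k).length := by rw [hLlen]; omega
    rw [List.getD_eq_getElem _ _ hi, List.getD_eq_getElem _ _ hi'] at hEq
    have := ((hLnodup k).getElem_inj_iff (hi := hi) (hj := hi')).mp hEq
    omega
  have hInj : Function.Injective σf := by
    intro n n' hEq
    have hb := hσmem n
    have hb' := hσmem n'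
    rw [hEq] at hb
    rw [Finset.mem_Ico] at hb hb'
    have hKK : K n = K n' := by
      rcases lt_trichotomy (K n) (K n') with hlt | heq | hgt
      · have : M (K n + 1) ≤ M (K n') := hMmono.monotone (Nat.succ_le_of_lt hlt)
        omega
      · exact heq
      · have : M (K n' + 1) ≤ M (K n) := hMmono.monotone (Nat.succ_le_of_lt hgt)
        omega
    exact hinjblock (K n) n n' (hKge n) (hKlt n) (by rw [hKK]; exact hKge n')
      (by rw [hKK]; exact hKlt n') hEq
  have hSurj : Function.Surjective σf := by
    intro y
    set k := K y with hk
    have hy : y ∈ Finset.Ico (M k) (M (k + 1)) := Finset.mem_Ico.mpr ⟨hKge y, hKlt y⟩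
    have himg : Finset.image σf (Finset.Ico (M k) (M (k + 1))) = Finset.Ico (M k) (M (k + 1)) := by
      apply Finset.eq_of_subset_of_card_le
      · intro z hz
        obtain ⟨n, hn, rfl⟩ := Finset.mem_image.mp hz
        rw [Finset.mem_Ico] at hn
        exact hσblock k n hn.1 hn.2
      · rw [Finset.card_image_of_injective _ hInj]
    rw [← himg] at hy
    obtain ⟨n, _, hn⟩ := Finset.mem_image.mp hy
    exact ⟨n, hn⟩
  set σ : Equiv.Perm ℕ := Equiv.ofBijective σf ⟨hInj, hSurj⟩ with hσ
  obtain ⟨Lim, hLim⟩ := hu σ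
  have hC := hLim.cauchySeq
  rw [Metric.cauchySeq_iff] at hC
  obtain ⟨N, hN⟩ := hC ε hε
  -- contradiction at block N
  set k := N with hkN
  set c := (t k).card with hc
  have hc1 : c ≤ M (k + 1) - M k := hcle k
  have hcpos : 0 < c := Finset.card_pos.mpr (htne k)
  -- last c positions map onto t k
  have hlast : ∀ n, M (k + 1) - c ≤ n → n < M (k + 1) → σf n ∈ t k := by
    intro n h1 h2
    have hMk : M k ≤ n := by omega
    rw [hσdef]
    simp only
    rw [hKuniq n k hMk h2]
    have hlen1 : ((Finset.Ico (M k) (M (k + 1)) \ t k).sort (· ≤ ·)).length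
        = (M (k + 1) - M k) - c := by rw [Finset.length_sort, hcard k]
    have hge : ((Finset.Ico (M k) (M (k + 1)) \ t k).sort (· ≤ ·)).length ≤ n - M k := by omega
    rw [hLdef]
    simp only
    rw [List.getD_append_right _ _ _ _ hge]
    have hidx2 : n - M k - ((Finset.Ico (M k) (M (k + 1)) \ t k).sort (· ≤ ·)).length
        < ((t k).sort (· ≤ ·)).length := by
      simp only [Finset.length_sort, hcard k]; omega
    rw [List.getD_eq_getElem _ _ hidx2]
    have := List.getElem_mem hidx2
    rwa [Finset.mem_sort] at this
  have himgt : Finset.image σf (Finset.Ico (M (k + 1) - c) (M (k + 1))) = t k := by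
    apply Finset.eq_of_subset_of_card_le
    · intro z hz
      obtain ⟨n, hn, rfl⟩ := Finset.mem_image.mp hz
      rw [Finset.mem_Ico] at hn
      exact hlast n hn.1 hn.2
    · rw [Finset.card_image_of_injective _ hInj, Nat.card_Ico]
      have : M k ≤ M (k + 1) := le_of_lt (hMlt k)
      omega
  have hsum2 : ∑ n ∈ Finset.Ico (M (k + 1) - c) (M (k + 1)), x (σ n) = ∑ i ∈ t k, x i := by
    show ∑ n ∈ Finset.Ico (M (k + 1) - c) (M (k + 1)), x (σf n) = ∑ i ∈ t k, x i
    rw [← himgt, Finset.sum_image (fun a _ b _ hab => hInj hab)]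
  have hsplit : ∑ n ∈ Finset.range (M (k + 1)), x (σ n)
      = ∑ n ∈ Finset.range (M (k + 1) - c), x (σ n) + ∑ i ∈ t k, x i := by
    rw [← hsum2, Finset.range_eq_Ico]
    have h1 : (0:ℕ) ≤ M (k + 1) - c := Nat.zero_le _
    have h2 : M (k + 1) - c ≤ M (k + 1) := Nat.sub_le _ _
    rw [Finset.range_eq_Ico]
    exact (Finset.sum_Ico_consecutive (fun n => x (σ n)) h1 h2).symm
  have hge1 : N ≤ M (k + 1) - c := by
    have := hMle k
    omega
  have hge2 : N ≤ M (k + 1) := by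
    have := hMle (k + 1); omega
  have := hN (M (k + 1)) hge2 (M (k + 1) - c) hge1
  rw [dist_eq_norm, hsplit] at this
  simp only [add_sub_cancel_left] at this
  exact absurd this (not_lt.mpr (htn k))

/-- Rademacher-type averaging identity over all sign patterns indexed by subsets. -/
lemma rad_sum {E : Type*} [NormedAddCommGroup E] [InnerProductSpace ℂ E]
    (x : ℕ → E) (F : Finset ℕ) :
    ∑ G ∈ F.powerset, ‖∑ n ∈ F, (if n ∈ G then (1:ℝ) else -1) • x n‖ ^ 2
      = 2 ^ F.card * ∑ n ∈ F, ‖x n‖ ^ 2 := by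
  classical
  induction F using Finset.induction_on with
  | empty => simp
  | @insert a s ha ih =>
    have hdisj : Disjoint s.powerset (s.powerset.image (insert a)) := by
      rw [Finset.disjoint_left]
      intro G hG hG2
      obtain ⟨G', _, rfl⟩ := Finset.mem_image.mp hG2
      exact ha (Finset.mem_powerset.mp hG (Finset.mem_insert_self a G'))
    have hinjins : ∀ G ∈ s.powerset, ∀ G' ∈ s.powerset, insert a G = insert a G' → G = G' := by
      intro G hG G' hG' hEq
      rw [Finset.mem_powerset] at hG hG'
      ext n
      constructor
      · intro hn
        have h2 : n ∈ insert a G' := hEq ▸ Finset.mem_insert_of_mem hn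
        rcases Finset.mem_insert.mp h2 with rfl | hh
        · exact absurd (hG hn) ha
        · exact hh
      · intro hn
        have h2 : n ∈ insert a G := hEq.symm ▸ Finset.mem_insert_of_mem hn
        rcases Finset.mem_insert.mp h2 with rfl | hh
        · exact absurd (hG' hn) ha
        · exact hh
    rw [Finset.powerset_insert, Finset.sum_union hdisj, Finset.sum_image hinjins]
    have e1 : ∀ G ∈ s.powerset,
        ‖∑ n ∈ insert a s, (if n ∈ G then (1:ℝ) else -1) • x n‖ ^ 2
        = ‖(∑ n ∈ s, (if n ∈ G then (1:ℝ) else -1) • x n) - x a‖ ^ 2 := by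
      intro G hG
      rw [Finset.sum_insert ha, if_neg (fun hc => ha (Finset.mem_powerset.mp hG hc)),
        neg_one_smul, neg_add_eq_sub]
    have e2 : ∀ G ∈ s.powerset,
        ‖∑ n ∈ insert a s, (if n ∈ insert a G then (1:ℝ) else -1) • x n‖ ^ 2
        = ‖(∑ n ∈ s, (if n ∈ G then (1:ℝ) else -1) • x n) + x a‖ ^ 2 := by
      intro G hG
      rw [Finset.sum_insert ha, if_pos (Finset.mem_insert_self a G), one_smul, add_comm]
      congr 3
      apply Finset.sum_congr rfl
      intro n hn
      have hna : n ≠ a := fun hh => ha (hh ▸ hn)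
      congr 1
      simp [Finset.mem_insert, hna]
    rw [Finset.sum_congr rfl e1, Finset.sum_congr rfl e2]
    have pl : ∀ v : E, ‖v - x a‖ ^ 2 + ‖v + x a‖ ^ 2 = 2 * ‖v‖ ^ 2 + 2 * ‖x a‖ ^ 2 := by
      intro v
      have hp := parallelogram_law_with_norm ℂ v (x a)
      simp only [pow_two]
      linarith
    rw [← Finset.sum_add_distrib, Finset.sum_congr rfl (fun G _ => pl _),
      Finset.sum_add_distrib, ← Finset.mul_sum, ih, Finset.sum_const, Finset.card_powerset,
      Finset.card_insert_of_notMem ha, Finset.sum_insert ha, nsmul_eq_mul]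
    push_cast
    ring

/-- Some sign pattern dominates the square sum. -/
lemma rad_exists {E : Type*} [NormedAddCommGroup E] [InnerProductSpace ℂ E]
    (x : ℕ → E) (F : Finset ℕ) :
    ∃ G, G ⊆ F ∧ ∑ n ∈ F, ‖x n‖ ^ 2
      ≤ ‖∑ n ∈ F, (if n ∈ G then (1:ℝ) else -1) • x n‖ ^ 2 := by
  classical
  by_contra hc
  push_neg at hc
  have hlt : ∀ G ∈ F.powerset,
      ‖∑ n ∈ F, (if n ∈ G then (1:ℝ) else -1) • x n‖ ^ 2 < ∑ n ∈ F, ‖x n‖ ^ 2 :=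
    fun G hG => hc G (Finset.mem_powerset.mp hG)
  have hsum := Finset.sum_lt_sum_of_nonempty ⟨∅, Finset.empty_mem_powerset F⟩ hlt
  rw [rad_sum, Finset.sum_const, Finset.card_powerset, nsmul_eq_mul] at hsum
  push_cast at hsum
  linarith

/-- The coefficient functional `f ↦ m n * ⟪f, ψ n⟫`, as a real-linear continuous map. -/
noncomputable def coefCLM (ψ : ℕ → H) (m : ℕ → ℂ) (n : ℕ) : H →L[ℝ] ℂ :=
  m n • (Complex.conjCLE.toContinuousLinearMap.comp ((innerSL ℂ (ψ n)).restrictScalars ℝ))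

lemma coefCLM_apply (ψ : ℕ → H) (m : ℕ → ℂ) (n : ℕ) (f : H) :
    coefCLM ψ m n f = m n * ⟪f, ψ n⟫ := by
  simp [coefCLM, inner_conj_symm]

/-- The partial multiplier operator over a finite index set. -/
noncomputable def Tg (φ ψ : ℕ → H) (m : ℕ → ℂ) (G : Finset ℕ) : H →L[ℝ] H :=
  ∑ n ∈ G, (coefCLM ψ m n).smulRight (φ n)

lemma Tg_apply (φ ψ : ℕ → H) (m : ℕ → ℂ) (G : Finset ℕ) (f : H) :
    Tg φ ψ m G f = ∑ n ∈ G, (m n * ⟪f, ψ n⟫) • φ n := by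
  simp [Tg, ContinuousLinearMap.sum_apply, ContinuousLinearMap.smulRight_apply, coefCLM_apply]

theorem stmt9 (φ ψ : ℕ → H) (m : ℕ → ℂ)
    (h : ∀ f : H, UncondConv (fun n => (m n * ⟪f, ψ n⟫) • φ n))
    (hnbb : ∃ a : ℝ, 0 < a ∧ ∀ n, a ≤ ‖φ n‖) :
    Bessel (fun n => m n • ψ n) := by
  classical
  obtain ⟨a, ha, hlb⟩ := hnbb
  -- uniform bound on the partial multiplier operators via Banach–Steinhaus
  have hpt : ∀ f : H, ∃ C, ∀ G : Finset ℕ, ‖Tg φ ψ m G f‖ ≤ C := by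
    intro f
    have hsum : Summable (fun n => (m n * ⟪f, ψ n⟫) • φ n) := uncondConv_summable _ (h f)
    obtain ⟨s₀, hs₀⟩ := summable_iff_vanishing_norm.mp hsum 1 one_pos
    refine ⟨∑ n ∈ s₀, ‖(m n * ⟪f, ψ n⟫) • φ n‖ + 1, fun G => ?_⟩
    rw [Tg_apply]
    rw [← Finset.sum_inter_add_sum_sdiff G s₀ (fun n => (m n * ⟪f, ψ n⟫) • φ n)]
    refine le_trans (norm_add_le _ _) (add_le_add ?_ ?_)
    · refine le_trans (norm_sum_le _ _) ?_
      exact Finset.sum_le_sum_of_subset_of_nonneg Finset.inter_subset_right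
        (fun _ _ _ => norm_nonneg _)
    · exact le_of_lt (hs₀ _ Finset.sdiff_disjoint)
  obtain ⟨C, hC⟩ := banach_steinhaus hpt
  have hC0 : 0 ≤ C := le_trans (norm_nonneg _) (hC ∅)
  refine ⟨(2 * C) ^ 2 / a ^ 2, fun f F => ?_⟩
  simp only [inner_smul_right]
  set cvec : ℕ → ℂ := fun n => m n * ⟪f, ψ n⟫ with hcvec
  set xv : ℕ → H := fun n => cvec n • φ n with hxv
  have h1 : ∀ n, a ^ 2 * ‖cvec n‖ ^ 2 ≤ ‖xv n‖ ^ 2 := by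
    intro n
    rw [hxv]
    simp only [norm_smul]
    have h2 := hlb n
    have h4 : a ^ 2 ≤ ‖φ n‖ ^ 2 := by nlinarith
    calc a ^ 2 * ‖cvec n‖ ^ 2 ≤ ‖φ n‖ ^ 2 * ‖cvec n‖ ^ 2 :=
          mul_le_mul_of_nonneg_right h4 (sq_nonneg _)
      _ = (‖cvec n‖ * ‖φ n‖) ^ 2 := by ring
  obtain ⟨G, hGF, hGle⟩ := rad_exists xv F
  have hsplit : ∑ n ∈ F, (if n ∈ G then (1:ℝ) else -1) • xv n
      = Tg φ ψ m G f - Tg φ ψ m (F \ G) f := by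
    rw [Tg_apply, Tg_apply]
    have : ∀ n, (if n ∈ G then (1:ℝ) else -1) • xv n
        = if n ∈ G then xv n else -(xv n) := by
      intro n
      split <;> simp
    rw [Finset.sum_congr rfl (fun n _ => this n), Finset.sum_ite, Finset.sum_neg_distrib]
    rw [Finset.filter_mem_eq_inter, Finset.inter_eq_right.mpr hGF]
    have hsd : F.filter (fun n => n ∉ G) = F \ G := (Finset.sdiff_eq_filter F G).symm
    rw [hsd, sub_eq_add_neg]
  have hbnd : ‖∑ n ∈ F, (if n ∈ G then (1:ℝ) else -1) • xv n‖ ≤ 2 * C * ‖f‖ := by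
    rw [hsplit]
    refine le_trans (norm_sub_le _ _) ?_
    have b1 : ‖Tg φ ψ m G f‖ ≤ C * ‖f‖ :=
      le_trans ((Tg φ ψ m G).le_opNorm f) (mul_le_mul_of_nonneg_right (hC G) (norm_nonneg f))
    have b2 : ‖Tg φ ψ m (F \ G) f‖ ≤ C * ‖f‖ :=
      le_trans ((Tg φ ψ m (F \ G)).le_opNorm f)
        (mul_le_mul_of_nonneg_right (hC (F \ G)) (norm_nonneg f))
    linarith
  have hsq : ‖∑ n ∈ F, (if n ∈ G then (1:ℝ) else -1) • xv n‖ ^ 2 ≤ (2 * C * ‖f‖) ^ 2 :=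
    pow_le_pow_left₀ (norm_nonneg _) hbnd 2
  have hchain : a ^ 2 * ∑ n ∈ F, ‖cvec n‖ ^ 2 ≤ (2 * C * ‖f‖) ^ 2 := by
    rw [Finset.mul_sum]
    exact le_trans (Finset.sum_le_sum (fun n _ => h1 n)) (le_trans hGle hsq)
  rw [div_mul_eq_mul_div, le_div_iff₀ (by positivity : (0:ℝ) < a ^ 2)]
  nlinarith [hchain]
end

section
/- If M_{m,Φ,Ψ} is unconditionally convergent on H and Φ, Ψ, and m are all norm-bounded below, then m is semi-normalized and both Φ and Ψ are Bessel sequences for H. -/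
open scoped BigOperators ComplexConjugate
open Filter Finset

variable {H : Type*} [NormedAddCommGroup H] [InnerProductSpace ℂ H] [CompleteSpace H]

local notation "⟪" x ", " y "⟫" => @inner ℂ _ _ x y

/-! ### Auxiliary lemmas -/

lemma sum_getD_nodup {E : Type*} [AddCommMonoid E] (f : ℕ → E) :
    ∀ (l : List ℕ), l.Nodup →
      ∑ i ∈ Finset.range l.length, f (l.getD i 0) = ∑ j ∈ l.toFinset, f j := by
  intro l
  induction l with
  | nil => simp
  | cons a l ih =>
    intro hnd
    rw [List.nodup_cons] at hnd
    have h1 : ∀ i, ((a :: l).getD (i + 1) 0) = l.getD i 0 := fun i => List.getD_cons_succ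
    rw [List.length_cons, Finset.sum_range_succ']
    simp only [h1, List.getD_cons_zero]
    rw [ih hnd.2, List.toFinset_cons, Finset.sum_insert (by simpa using hnd.1)]
    abel

/-- If every rearrangement of a series converges, then the finite partial sums are
uniformly bounded. -/
lemma uncond_bounded {E : Type*} [NormedAddCommGroup E] (x : ℕ → E)
    (hx : ∀ σ : Equiv.Perm ℕ, ∃ L : E,
      Tendsto (fun N => ∑ n ∈ Finset.range N, x (σ n)) atTop (nhds L)) :
    ∃ C : ℝ, ∀ F : Finset ℕ, ‖∑ n ∈ F, x n‖ ≤ C := by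
  by_contra hC
  push_neg at hC
  -- tail version: arbitrarily far out finite sets with big sums
  have key : ∀ N : ℕ, ∃ t : Finset ℕ, (∀ j ∈ t, N ≤ j) ∧ 1 ≤ ‖∑ j ∈ t, x j‖ := by
    intro N
    obtain ⟨F, hF⟩ := hC (∑ j ∈ Finset.range N, ‖x j‖ + 1)
    refine ⟨F \ Finset.range N, fun j hj => ?_, ?_⟩
    · rcases Finset.mem_sdiff.1 hj with ⟨-, hj2⟩
      simpa using hj2
    · have hsplit := Finset.sum_inter_add_sum_sdiff F (Finset.range N) x
      have h1 : ‖∑ j ∈ F ∩ Finset.range N, x j‖ ≤ ∑ j ∈ Finset.range N, ‖x j‖ := by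
        refine le_trans (norm_sum_le _ _) ?_
        exact Finset.sum_le_sum_of_subset_of_nonneg (Finset.inter_subset_right)
          (fun _ _ _ => norm_nonneg _)
      have h2 : ‖∑ j ∈ F, x j‖ ≤ ‖∑ j ∈ F ∩ Finset.range N, x j‖
          + ‖∑ j ∈ F \ Finset.range N, x j‖ := by
        rw [← hsplit]; exact norm_add_le _ _
      linarith
  choose t ht1 ht2 using key
  -- the sequence of block boundaries
  let a : ℕ → ℕ := fun k => Nat.rec 0 (fun _ ak => (t ak).sup id + 1) k
  have ha0 : a 0 = 0 := rfl
  have haS : ∀ k, a (k + 1) = (t (a k)).sup id + 1 := fun k => rfl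
  have htne : ∀ N, (t N).Nonempty := by
    intro N
    rcases Finset.eq_empty_or_nonempty (t N) with h | h
    · exfalso; have := ht2 N; rw [h] at this; simp at this; linarith
    · exact h
  have htIco : ∀ k, ∀ j ∈ t (a k), a k ≤ j ∧ j < a (k + 1) := by
    intro k j hj
    refine ⟨ht1 _ _ hj, ?_⟩
    rw [haS]
    exact Nat.lt_succ_of_le (Finset.le_sup (f := id) hj)
  have hamono : StrictMono a := by
    apply strictMono_nat_of_lt_succ
    intro k
    obtain ⟨j, hj⟩ := htne (a k)
    obtain ⟨h1, h2⟩ := htIco k j hj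
    omega
  have hak : ∀ k, k ≤ a k := fun k => hamono.le_apply
  -- blocks
  set u : ℕ → Finset ℕ := fun k => t (a k) with hu
  set I : ℕ → Finset ℕ := fun k => Finset.Ico (a k) (a (k + 1)) with hI
  have huI : ∀ k, u k ⊆ I k := by
    intro k j hj
    rw [hI, Finset.mem_Ico]
    exact ⟨(htIco k j hj).1, (htIco k j hj).2⟩
  set v : ℕ → Finset ℕ := fun k => I k \ u k with hv
  set L : ℕ → List ℕ := fun k => (u k).sort (· ≤ ·) ++ (v k).sort (· ≤ ·) with hL
  have hLlen : ∀ k, (L k).length = a (k + 1) - a k := by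
    intro k
    rw [hL]
    simp only [List.length_append, Finset.length_sort]
    rw [hv]
    rw [Finset.card_sdiff_of_subset (huI k)]
    have := Finset.card_le_card (huI k)
    have hIcard : (I k).card = a (k + 1) - a k := by rw [hI]; exact Nat.card_Ico _ _
    omega
  have hLnd : ∀ k, (L k).Nodup := by
    intro k
    refine List.Nodup.append (Finset.sort_nodup _ _) (Finset.sort_nodup _ _) ?_
    intro j hj1 hj2
    rw [Finset.mem_sort] at hj1 hj2
    rw [hv, Finset.mem_sdiff] at hj2
    exact hj2.2 hj1
  have hLmem : ∀ k j, j ∈ L k ↔ j ∈ I k := by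
    intro k j
    rw [hL, List.mem_append, Finset.mem_sort, Finset.mem_sort, hv, Finset.mem_sdiff]
    constructor
    · rintro (h | h)
      · exact huI k h
      · exact h.1
    · intro h
      by_cases hj : j ∈ u k
      · exact Or.inl hj
      · exact Or.inr ⟨h, hj⟩
  -- block index
  have hexK : ∀ n : ℕ, ∃ k, n < a (k + 1) := by
    intro n
    exact ⟨n, lt_of_lt_of_le (Nat.lt_succ_self n) (hak (n + 1))⟩
  set K : ℕ → ℕ := fun n => Nat.find (hexK n) with hK
  have hK2 : ∀ n, n < a (K n + 1) := fun n => Nat.find_spec (hexK n)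
  have hK1 : ∀ n, a (K n) ≤ n := by
    intro n
    rcases Nat.eq_zero_or_pos (K n) with h | h
    · rw [h, ha0]; exact Nat.zero_le n
    · obtain ⟨j, hj⟩ := Nat.exists_eq_succ_of_ne_zero (Nat.pos_iff_ne_zero.1 h)
      have hlt : ¬ (n < a (j + 1)) := Nat.find_min (hexK n) (show j < K n by omega)
      push_neg at hlt
      rw [hj]
      exact hlt
  have hKeq : ∀ n k, a k ≤ n → n < a (k + 1) → K n = k := by
    intro n k h1 h2
    have hle : K n ≤ k := Nat.find_min' (hexK n) h2
    rcases lt_or_eq_of_le hle with hlt | heq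
    · exfalso
      have : a (K n + 1) ≤ a k := hamono.monotone (Nat.succ_le_of_lt hlt)
      have := hK2 n
      omega
    · exact heq
  -- the function
  set g : ℕ → ℕ := fun n => (L (K n)).getD (n - a (K n)) 0 with hg
  have hgdef : ∀ n, g n = (L (K n)).getD (n - a (K n)) 0 := fun n => rfl
  have hidx : ∀ n, n - a (K n) < (L (K n)).length := by
    intro n
    rw [hLlen]
    have := hK1 n; have := hK2 n
    omega
  have hgmem : ∀ n, g n ∈ I (K n) := by
    intro n
    rw [← hLmem]
    rw [hgdef, List.getD_eq_getElem (L (K n)) 0 (hidx n)]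
    exact List.getElem_mem _
  have hKg : ∀ n, K (g n) = K n := by
    intro n
    have := hgmem n
    rw [hI, Finset.mem_Ico] at this
    exact hKeq _ _ this.1 this.2
  have hginj : Function.Injective g := by
    intro p q hpq0
    have hpq : g p = g q := hpq0
    have hKpq : K p = K q := by
      rw [← hKg p, ← hKg q]; exact congrArg K hpq
    rw [hgdef, hgdef] at hpq
    rw [← hKpq] at hpq
    have hiq : q - a (K p) < (L (K p)).length := by rw [hKpq]; exact hidx q
    have hip : p - a (K p) < (L (K p)).length := hidx p
    rw [List.getD_eq_getElem (L (K p)) 0 hip, List.getD_eq_getElem (L (K p)) 0 hiq] at hpq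
    have heq := (List.Nodup.getElem_inj_iff (hLnd (K p))).1 hpq
    have h1 := hK1 p; have h2 := hK1 q
    rw [← hKpq] at h2
    omega
  have hgsurj : Function.Surjective g := by
    intro j
    set k := K j with hk
    have hjI : j ∈ I k := by rw [hI, Finset.mem_Ico]; exact ⟨hK1 j, hK2 j⟩
    have hjL : j ∈ L k := (hLmem k j).2 hjI
    obtain ⟨i, hi, hij⟩ := List.getElem_of_mem hjL
    refine ⟨a k + i, ?_⟩
    have hKn : K (a k + i) = k := by
      apply hKeq
      · omega
      · have := hLlen k
        have hak1 : a k ≤ a (k + 1) := hamono.monotone (Nat.le_succ k)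
        omega
    rw [hgdef, hKn]
    have h5 : a k + i - a k = i := by omega
    rw [h5, List.getD_eq_getElem (L k) 0 (by omega)]
    exact hij
  -- the permutation
  set σ : Equiv.Perm ℕ := Equiv.ofBijective g ⟨hginj, hgsurj⟩ with hσ
  obtain ⟨Lim, hTend⟩ := hx σ
  have hCauchy := hTend.cauchySeq
  rw [Metric.cauchySeq_iff] at hCauchy
  obtain ⟨N, hN⟩ := hCauchy 1 one_pos
  -- block sum identity
  have hblock : ∀ k, ∑ n ∈ Finset.Ico (a k) (a k + (u k).card), x (g n)
      = ∑ j ∈ u k, x j := by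
    intro k
    have hcard : (u k).card ≤ a (k + 1) - a k := by
      have := Finset.card_le_card (huI k)
      have : (I k).card = a (k + 1) - a k := by rw [hI]; exact Nat.card_Ico _ _
      omega
    rw [Finset.sum_Ico_eq_sum_range]
    have hsub : a k + (u k).card - a k = (u k).card := by omega
    rw [hsub]
    have hKn : ∀ i < (u k).card, K (a k + i) = k := by
      intro i hi
      apply hKeq
      · omega
      · have hak1 : a k ≤ a (k + 1) := hamono.monotone (Nat.le_succ k)
        omega
    have hgv : ∀ i < (u k).card, g (a k + i) = ((u k).sort (· ≤ ·)).getD i 0 := by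
      intro i hi
      rw [hgdef, hKn i hi]
      have h6 : a k + i - a k = i := by omega
      rw [h6, hL]
      exact List.getD_append _ _ 0 i (by rwa [Finset.length_sort])
    rw [Finset.sum_congr rfl (fun i hi => by
      rw [hgv i (Finset.mem_range.1 hi)])]
    have := sum_getD_nodup x ((u k).sort (· ≤ ·)) (Finset.sort_nodup _ _)
    rw [Finset.length_sort] at this
    rw [this, Finset.sort_toFinset]
  -- contradiction
  have hp : N ≤ a N := hak N
  have hq : N ≤ a N + (u N).card := le_trans hp (Nat.le_add_right _ _)
  have hdist := hN (a N + (u N).card) hq (a N) hp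
  rw [dist_eq_norm] at hdist
  have hsum : (∑ n ∈ Finset.range (a N + (u N).card), x (σ n))
      - ∑ n ∈ Finset.range (a N), x (σ n) = ∑ j ∈ u N, x j := by
    rw [← Finset.sum_Ico_eq_sub _ (Nat.le_add_right _ _)]
    rw [← hblock N]
    rfl
  rw [hsum] at hdist
  have hfin : (1 : ℝ) ≤ ‖∑ j ∈ u N, x j‖ := ht2 (a N)
  linarith

/-- Choice of signs making the signed sum large (parallelogram law induction). -/
lemma signs_exists {H : Type*} [NormedAddCommGroup H] [InnerProductSpace ℂ H]
    (y : ℕ → H) (F : Finset ℕ) :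
    ∃ ε : ℕ → ℝ, (∀ n, ε n = 1 ∨ ε n = -1) ∧
      ∑ n ∈ F, ‖y n‖ ^ 2 ≤ ‖∑ n ∈ F, ε n • y n‖ ^ 2 := by
  classical
  induction F using Finset.induction_on with
  | empty => exact ⟨fun _ => 1, fun _ => Or.inl rfl, by simp⟩
  | @insert a F ha ih =>
    obtain ⟨ε, hε, hle⟩ := ih
    set S := ∑ n ∈ F, ε n • y n with hS
    have hpar := parallelogram_law_with_norm ℂ (y a) S
    rcases le_total (‖y a - S‖) (‖y a + S‖) with hc | hc
    · refine ⟨Function.update ε a 1, ?_, ?_⟩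
      · intro n
        rcases eq_or_ne n a with rfl | hn
        · rw [Function.update_self]; exact Or.inl rfl
        · rw [Function.update_of_ne hn]; exact hε n
      · rw [Finset.sum_insert ha, Finset.sum_insert ha]
        have hFsum : ∑ n ∈ F, Function.update ε a 1 n • y n = S :=
          Finset.sum_congr rfl fun n hn => by
            rw [Function.update_of_ne (ne_of_mem_of_not_mem hn ha)]
        rw [hFsum, Function.update_self, one_smul]
        have hsq : ‖y a - S‖ ^ 2 ≤ ‖y a + S‖ ^ 2 :=
          pow_le_pow_left₀ (norm_nonneg _) hc 2
        nlinarith [hpar]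
    · refine ⟨Function.update ε a (-1), ?_, ?_⟩
      · intro n
        rcases eq_or_ne n a with rfl | hn
        · rw [Function.update_self]; exact Or.inr rfl
        · rw [Function.update_of_ne hn]; exact hε n
      · rw [Finset.sum_insert ha, Finset.sum_insert ha]
        have hFsum : ∑ n ∈ F, Function.update ε a (-1) n • y n = S :=
          Finset.sum_congr rfl fun n hn => by
            rw [Function.update_of_ne (ne_of_mem_of_not_mem hn ha)]
        rw [hFsum, Function.update_self]
        have hnorm : ‖(-1 : ℝ) • y a + S‖ = ‖y a - S‖ := by
          rw [neg_one_smul, ← norm_neg]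
          congr 1
          abel
        rw [hnorm]
        have hsq : ‖y a + S‖ ^ 2 ≤ ‖y a - S‖ ^ 2 :=
          pow_le_pow_left₀ (norm_nonneg _) hc 2
        nlinarith [hpar]

/-- The finite-section multiplier as a real-linear continuous map. -/
noncomputable def multOp {H : Type*} [NormedAddCommGroup H] [InnerProductSpace ℂ H]
    (φ ψ : ℕ → H) (m : ℕ → ℂ) (F : Finset ℕ) : H →L[ℝ] H :=
  LinearMap.mkContinuous
    { toFun := fun f => ∑ n ∈ F, (m n * ⟪f, ψ n⟫) • φ n
      map_add' := fun f g => by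
        simp [inner_add_left, mul_add, add_smul, Finset.sum_add_distrib]
      map_smul' := fun c f => by
        simp only [RingHom.id_apply, RCLike.real_smul_eq_coe_smul (K := ℂ) c,
          inner_smul_left, Finset.smul_sum, smul_smul]
        refine Finset.sum_congr rfl fun n _ => ?_
        rw [RCLike.conj_ofReal]
        ring_nf }
    (∑ n ∈ F, ‖m n‖ * (‖ψ n‖ * ‖φ n‖))
    (by
      intro f
      refine le_trans (norm_sum_le _ _) ?_
      rw [Finset.sum_mul]
      refine Finset.sum_le_sum fun n _ => ?_
      rw [norm_smul, norm_mul]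
      calc ‖m n‖ * ‖⟪f, ψ n⟫‖ * ‖φ n‖
          ≤ ‖m n‖ * (‖f‖ * ‖ψ n‖) * ‖φ n‖ := by
            gcongr
            exact norm_inner_le_norm _ _
        _ = ‖m n‖ * (‖ψ n‖ * ‖φ n‖) * ‖f‖ := by ring)

lemma multOp_apply {H : Type*} [NormedAddCommGroup H] [InnerProductSpace ℂ H]
    (φ ψ : ℕ → H) (m : ℕ → ℂ) (F : Finset ℕ) (f : H) :
    multOp φ ψ m F f = ∑ n ∈ F, (m n * ⟪f, ψ n⟫) • φ n := rfl

theorem stmt11 (φ ψ : ℕ → H) (m : ℕ → ℂ)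
    (h : ∀ f : H, UncondConv (fun n => (m n * ⟪f, ψ n⟫) • φ n))
    (hφ : ∃ a : ℝ, 0 < a ∧ ∀ n, a ≤ ‖φ n‖)
    (hψ : ∃ a : ℝ, 0 < a ∧ ∀ n, a ≤ ‖ψ n‖)
    (hm : ∃ a : ℝ, 0 < a ∧ ∀ n, a ≤ ‖m n‖) :
    (∃ a b : ℝ, 0 < a ∧ ∀ n, a ≤ ‖m n‖ ∧ ‖m n‖ ≤ b) ∧ Bessel φ ∧ Bessel ψ := by
  classical
  obtain ⟨aφ, haφ, haφ'⟩ := hφ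
  obtain ⟨aψ, haψ, haψ'⟩ := hψ
  obtain ⟨am, ham, ham'⟩ := hm
  -- uniform boundedness
  have hbs : ∃ C : ℝ, ∀ F : Finset ℕ, ‖multOp φ ψ m F‖ ≤ C := by
    apply banach_steinhaus
    intro f
    obtain ⟨C, hC⟩ := uncond_bounded (fun n => (m n * ⟪f, ψ n⟫) • φ n) (h f)
    exact ⟨C, fun F => hC F⟩
  obtain ⟨C, hC⟩ := hbs
  have hC0 : (0 : ℝ) ≤ C := le_trans (norm_nonneg _) (hC ∅)
  have hmaster : ∀ (F : Finset ℕ) (f : H),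
      ‖∑ n ∈ F, (m n * ⟪f, ψ n⟫) • φ n‖ ≤ C * ‖f‖ := by
    intro F f
    rw [← multOp_apply φ ψ m F f]
    exact le_trans ((multOp φ ψ m F).le_opNorm f)
      (mul_le_mul_of_nonneg_right (hC F) (norm_nonneg f))
  have hsigned : ∀ (F : Finset ℕ) (f : H) (ε : ℕ → ℝ), (∀ n, ε n = 1 ∨ ε n = -1) →
      ‖∑ n ∈ F, ε n • ((m n * ⟪f, ψ n⟫) • φ n)‖ ≤ 2 * C * ‖f‖ := by
    intro F f ε hε
    have hsplit := Finset.sum_filter_add_sum_filter_not F (fun n => ε n = 1)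
      (fun n => ε n • ((m n * ⟪f, ψ n⟫) • φ n))
    have h1 : ∑ n ∈ F.filter (fun n => ε n = 1), ε n • ((m n * ⟪f, ψ n⟫) • φ n)
        = ∑ n ∈ F.filter (fun n => ε n = 1), (m n * ⟪f, ψ n⟫) • φ n :=
      Finset.sum_congr rfl fun n hn => by
        rw [(Finset.mem_filter.1 hn).2, one_smul]
    have h2 : ∑ n ∈ F.filter (fun n => ¬ ε n = 1), ε n • ((m n * ⟪f, ψ n⟫) • φ n)
        = - ∑ n ∈ F.filter (fun n => ¬ ε n = 1), (m n * ⟪f, ψ n⟫) • φ n := by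
      rw [← Finset.sum_neg_distrib]
      refine Finset.sum_congr rfl fun n hn => ?_
      have hne := (hε n).resolve_left (Finset.mem_filter.1 hn).2
      rw [hne, neg_one_smul]
    calc ‖∑ n ∈ F, ε n • ((m n * ⟪f, ψ n⟫) • φ n)‖
        = ‖(∑ n ∈ F.filter (fun n => ε n = 1), (m n * ⟪f, ψ n⟫) • φ n)
            + (- ∑ n ∈ F.filter (fun n => ¬ ε n = 1), (m n * ⟪f, ψ n⟫) • φ n)‖ := by
          rw [← h1, ← h2, hsplit]
      _ ≤ ‖∑ n ∈ F.filter (fun n => ε n = 1), (m n * ⟪f, ψ n⟫) • φ n‖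
            + ‖- ∑ n ∈ F.filter (fun n => ¬ ε n = 1), (m n * ⟪f, ψ n⟫) • φ n‖ :=
          norm_add_le _ _
      _ ≤ C * ‖f‖ + C * ‖f‖ := by
          rw [norm_neg]; exact add_le_add (hmaster _ f) (hmaster _ f)
      _ = 2 * C * ‖f‖ := by ring
  -- semi-normalization of m
  have hmb : ∀ n, ‖m n‖ ≤ C / (aψ * aφ) := by
    intro n
    have h1 := hmaster {n} (ψ n)
    rw [Finset.sum_singleton, norm_smul, norm_mul, inner_self_eq_norm_sq_to_K] at h1
    rw [norm_pow, RCLike.norm_ofReal, abs_norm] at h1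
    have hψpos : 0 < ‖ψ n‖ := lt_of_lt_of_le haψ (haψ' n)
    rw [le_div_iff₀ (by positivity)]
    have step : ‖m n‖ * (aψ * aφ) * ‖ψ n‖ ≤ C * ‖ψ n‖ := by
      calc ‖m n‖ * (aψ * aφ) * ‖ψ n‖
          ≤ ‖m n‖ * (‖ψ n‖ * ‖φ n‖) * ‖ψ n‖ := by
            have hle2 : aψ * aφ ≤ ‖ψ n‖ * ‖φ n‖ :=
              mul_le_mul (haψ' n) (haφ' n) haφ.le (norm_nonneg _)
            have := mul_le_mul_of_nonneg_left hle2 (norm_nonneg (m n))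
            exact mul_le_mul_of_nonneg_right this (norm_nonneg _)
        _ = ‖m n‖ * ‖ψ n‖ ^ 2 * ‖φ n‖ := by ring
        _ ≤ C * ‖ψ n‖ := h1
    exact le_of_mul_le_mul_right step hψpos
  refine ⟨⟨am, C / (aψ * aφ), ham, fun n => ⟨ham' n, hmb n⟩⟩, ?_, ?_⟩
  · -- Bessel φ
    have hsignedφ : ∀ (F : Finset ℕ) (f : H) (ε : ℕ → ℝ), (∀ n, ε n = 1 ∨ ε n = -1) →
        ‖∑ n ∈ F, ε n • ((m n * ⟪f, φ n⟫) • ψ n)‖ ≤ 2 * C * ‖f‖ := by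
      intro F f ε hε
      have hgg : ∀ g : H, (⟪∑ n ∈ F, ε n • ((m n * ⟪f, φ n⟫) • ψ n), g⟫ : ℂ)
          = (starRingEnd ℂ) ⟪f, ∑ n ∈ F, ε n • ((m n * ⟪g, ψ n⟫) • φ n)⟫ := by
        intro g
        rw [sum_inner, inner_sum, map_sum]
        refine Finset.sum_congr rfl fun n _ => ?_
        simp only [RCLike.real_smul_eq_coe_smul (K := ℂ), inner_smul_left, inner_smul_right,
          map_mul, RCLike.conj_ofReal, inner_conj_symm]
        ring
      set g := ∑ n ∈ F, ε n • ((m n * ⟪f, φ n⟫) • ψ n) with hgdef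
      have hkey : ‖g‖ ^ 2 ≤ 2 * C * ‖f‖ * ‖g‖ := by
        have hn2 : (‖g‖ ^ 2 : ℝ) = ‖(⟪g, g⟫ : ℂ)‖ := by
          rw [inner_self_eq_norm_sq_to_K, norm_pow, RCLike.norm_ofReal, abs_norm]
        rw [hn2, hgg g, RCLike.norm_conj]
        calc ‖(⟪f, ∑ n ∈ F, ε n • ((m n * ⟪g, ψ n⟫) • φ n)⟫ : ℂ)‖
            ≤ ‖f‖ * ‖∑ n ∈ F, ε n • ((m n * ⟪g, ψ n⟫) • φ n)‖ := norm_inner_le_norm _ _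
          _ ≤ ‖f‖ * (2 * C * ‖g‖) :=
              mul_le_mul_of_nonneg_left (hsigned F g ε hε) (norm_nonneg f)
          _ = 2 * C * ‖f‖ * ‖g‖ := by ring
      rcases eq_or_lt_of_le (norm_nonneg g) with h0 | h0
      · rw [← h0]
        have : (0 : ℝ) ≤ 2 * C * ‖f‖ := by positivity
        exact this
      · refine le_of_mul_le_mul_right ?_ h0
        nlinarith [hkey]
    refine ⟨4 * C ^ 2 / (am * aψ) ^ 2, fun f F => ?_⟩
    obtain ⟨ε, hε, hle⟩ := signs_exists (fun n => (m n * ⟪f, φ n⟫) • ψ n) F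
    have hterm : ∀ n ∈ F, (am * aψ) ^ 2 * ‖(⟪f, φ n⟫ : ℂ)‖ ^ 2
        ≤ ‖(m n * ⟪f, φ n⟫) • ψ n‖ ^ 2 := by
      intro n _
      rw [norm_smul, norm_mul]
      have hle1 : am * aψ * ‖(⟪f, φ n⟫ : ℂ)‖ ≤ ‖m n‖ * ‖(⟪f, φ n⟫ : ℂ)‖ * ‖ψ n‖ := by
        calc am * aψ * ‖(⟪f, φ n⟫ : ℂ)‖
            ≤ (‖m n‖ * ‖ψ n‖) * ‖(⟪f, φ n⟫ : ℂ)‖ :=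
              mul_le_mul_of_nonneg_right
                (mul_le_mul (ham' n) (haψ' n) haψ.le (norm_nonneg _)) (norm_nonneg _)
          _ = ‖m n‖ * ‖(⟪f, φ n⟫ : ℂ)‖ * ‖ψ n‖ := by ring
      calc (am * aψ) ^ 2 * ‖(⟪f, φ n⟫ : ℂ)‖ ^ 2
          = (am * aψ * ‖(⟪f, φ n⟫ : ℂ)‖) ^ 2 := by ring
        _ ≤ (‖m n‖ * ‖(⟪f, φ n⟫ : ℂ)‖ * ‖ψ n‖) ^ 2 :=
            pow_le_pow_left₀ (by positivity) hle1 2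
    have hsum1 : (am * aψ) ^ 2 * ∑ n ∈ F, ‖(⟪f, φ n⟫ : ℂ)‖ ^ 2
        ≤ ∑ n ∈ F, ‖(m n * ⟪f, φ n⟫) • ψ n‖ ^ 2 := by
      rw [Finset.mul_sum]; exact Finset.sum_le_sum hterm
    have hs := hsignedφ F f ε hε
    have hsq : ‖∑ n ∈ F, ε n • ((m n * ⟪f, φ n⟫) • ψ n)‖ ^ 2 ≤ (2 * C * ‖f‖) ^ 2 :=
      pow_le_pow_left₀ (norm_nonneg _) hs 2
    rw [div_mul_eq_mul_div, le_div_iff₀ (by positivity)]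
    nlinarith [hsum1, hle, hsq]
  · -- Bessel ψ
    refine ⟨4 * C ^ 2 / (am * aφ) ^ 2, fun f F => ?_⟩
    obtain ⟨ε, hε, hle⟩ := signs_exists (fun n => (m n * ⟪f, ψ n⟫) • φ n) F
    have hterm : ∀ n ∈ F, (am * aφ) ^ 2 * ‖(⟪f, ψ n⟫ : ℂ)‖ ^ 2
        ≤ ‖(m n * ⟪f, ψ n⟫) • φ n‖ ^ 2 := by
      intro n _
      rw [norm_smul, norm_mul]
      have hle1 : am * aφ * ‖(⟪f, ψ n⟫ : ℂ)‖ ≤ ‖m n‖ * ‖(⟪f, ψ n⟫ : ℂ)‖ * ‖φ n‖ := by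
        calc am * aφ * ‖(⟪f, ψ n⟫ : ℂ)‖
            ≤ (‖m n‖ * ‖φ n‖) * ‖(⟪f, ψ n⟫ : ℂ)‖ :=
              mul_le_mul_of_nonneg_right
                (mul_le_mul (ham' n) (haφ' n) haφ.le (norm_nonneg _)) (norm_nonneg _)
          _ = ‖m n‖ * ‖(⟪f, ψ n⟫ : ℂ)‖ * ‖φ n‖ := by ring
      calc (am * aφ) ^ 2 * ‖(⟪f, ψ n⟫ : ℂ)‖ ^ 2
          = (am * aφ * ‖(⟪f, ψ n⟫ : ℂ)‖) ^ 2 := by ring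
        _ ≤ (‖m n‖ * ‖(⟪f, ψ n⟫ : ℂ)‖ * ‖φ n‖) ^ 2 :=
            pow_le_pow_left₀ (by positivity) hle1 2
    have hsum1 : (am * aφ) ^ 2 * ∑ n ∈ F, ‖(⟪f, ψ n⟫ : ℂ)‖ ^ 2
        ≤ ∑ n ∈ F, ‖(m n * ⟪f, ψ n⟫) • φ n‖ ^ 2 := by
      rw [Finset.mul_sum]; exact Finset.sum_le_sum hterm
    have hs := hsigned F f ε hε
    have hsq : ‖∑ n ∈ F, ε n • ((m n * ⟪f, ψ n⟫) • φ n)‖ ^ 2 ≤ (2 * C * ‖f‖) ^ 2 :=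
      pow_le_pow_left₀ (norm_nonneg _) hs 2
    rw [div_mul_eq_mul_div, le_div_iff₀ (by positivity)]
    nlinarith [hsum1, hle, hsq]
end
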